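/- arXiv:1907.05448 — 2 statements merged into one kernel-verified Lean document; each statement's English description precedes it below -/
import Mathlib

section
/- Let σ ∈ [0,1) and let L ∈ ℝ^{n×n} satisfy L·1_n = 0, 1_nᵀ·L = 0, and ‖I_n − Π − L‖ ≤ σ in spectral norm, where Π := (1/n)·1_n 1_nᵀ. Then for every symmetric positive semidefinite matrix R ∈ ℝ^{c×c} and every z̃ ∈ ℝ^{nc}, setting ṽ := (L ⊗ I_c)·z̃, the quadratic form [z̃; ṽ]ᵀ (M₁ ⊗ (I_n − Π) ⊗ R) [z̃; ṽ] is nonnegative, where M₁ := [[σ²−1, 1],[1, −1]]. -/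
open Matrix BigOperators Kronecker

/-- The Euclidean norm of a vector. -/
noncomputable def enorm2 {ι : Type*} [Fintype ι] (v : ι → ℝ) : ℝ :=
  Real.sqrt (∑ i, v i ^ 2)

/-- The projection matrix `Π = (1/n) 1ₙ 1ₙᵀ` onto the span of the all-ones vector. -/
noncomputable def projOnes (n : ℕ) : Matrix (Fin n) (Fin n) ℝ :=
  Matrix.of fun _ _ => (n : ℝ)⁻¹

/-- The matrix `M₁ = [[σ²−1, 1],[1, −1]]`. -/
noncomputable def M1 (σ : ℝ) : Matrix (Fin 2) (Fin 2) ℝ :=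
  !![σ^2 - 1, 1; 1, -1]

/-! With `P := I − Π` and `S := P − L`, the hypotheses on `L` give `PL = LP = L`, hence
`S = P(I − L)` and `SP = S`. Since `M₁ = σ² e₁e₁ᵀ − (e₁ − e₂)(e₁ − e₂)ᵀ` and `z̃ − ṽ = ((I − L) ⊗ I)z̃`,
the quadratic form equals `z̃ᵀ((σ²P − SᵀS) ⊗ R)z̃`. Finally `σ²P − SᵀS = P(σ²I − SᵀS)P` is positive
semidefinite because `‖S‖ ≤ σ`, and so is its Kronecker product with `R`. -/

section Kronecker

variable {α ι κ : Type*} [CommRing α] [Fintype ι]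

lemma sub_kronecker {l m p q : Type*} (A B : Matrix l m α) (C : Matrix p q α) :
    (A - B) ⊗ₖ C = A ⊗ₖ C - B ⊗ₖ C := by
  ext i j
  simp [sub_mul]

lemma dotProduct_mulVec_comm_of_transpose_eq {K : Matrix ι ι α} (hK : Kᵀ = K) (x y : ι → α) :
    x ⬝ᵥ K *ᵥ y = y ⬝ᵥ K *ᵥ x := by
  rw [dotProduct_mulVec, ← mulVec_transpose, hK, dotProduct_comm]

lemma dotProduct_kronecker_mulVec_stack (M : Matrix (Fin 2) (Fin 2) α) (K : Matrix ι ι α)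
    (x y : ι → α) :
    (fun p : Fin 2 × ι => if p.1 = 0 then x p.2 else y p.2) ⬝ᵥ
        (M ⊗ₖ K) *ᵥ (fun p : Fin 2 × ι => if p.1 = 0 then x p.2 else y p.2) =
      M 0 0 * (x ⬝ᵥ K *ᵥ x) + M 0 1 * (x ⬝ᵥ K *ᵥ y)
        + M 1 0 * (y ⬝ᵥ K *ᵥ x) + M 1 1 * (y ⬝ᵥ K *ᵥ y) := by
  simp only [dotProduct, mulVec, kroneckerMap_apply, Fintype.sum_prod_type, Fin.sum_univ_two,
    Fin.isValue, one_ne_zero, if_true, if_false, mul_add, Finset.sum_add_distrib, Finset.mul_sum]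
  have reassoc (a m k b : α) : a * (m * k * b) = m * (a * (k * b)) := by ring
  simp only [reassoc]
  ring

lemma dotProduct_M1_kronecker_mulVec_stack (σ : ℝ) {K : Matrix ι ι ℝ} (hK : Kᵀ = K)
    (x y : ι → ℝ) :
    (fun p : Fin 2 × ι => if p.1 = 0 then x p.2 else y p.2) ⬝ᵥ
        (M1 σ ⊗ₖ K) *ᵥ (fun p : Fin 2 × ι => if p.1 = 0 then x p.2 else y p.2) =
      σ ^ 2 * (x ⬝ᵥ K *ᵥ x) - (x - y) ⬝ᵥ K *ᵥ (x - y) := by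
  rw [dotProduct_kronecker_mulVec_stack]
  simp only [M1, of_apply, cons_val', cons_val_zero, cons_val_one, empty_val',
    cons_val_fin_one, mulVec_sub, dotProduct_sub, sub_dotProduct]
  rw [dotProduct_mulVec_comm_of_transpose_eq hK y x]
  ring

lemma mulVec_dotProduct {m : Type*} [Fintype m] (A : Matrix ι m α) (v : m → α) (w : ι → α) :
    (A *ᵥ v) ⬝ᵥ w = v ⬝ᵥ Aᵀ *ᵥ w := by
  rw [dotProduct_mulVec, vecMul_transpose, dotProduct_comm]

lemma kronecker_one_mulVec_dotProduct_kronecker_mulVec [Fintype κ] [DecidableEq κ]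
    (A B : Matrix ι ι α) (R : Matrix κ κ α) (z : ι × κ → α) :
    ((A ⊗ₖ (1 : Matrix κ κ α)) *ᵥ z) ⬝ᵥ (B ⊗ₖ R) *ᵥ ((A ⊗ₖ (1 : Matrix κ κ α)) *ᵥ z) =
      z ⬝ᵥ ((Aᵀ * B * A) ⊗ₖ R) *ᵥ z := by
  rw [mulVec_mulVec, ← mul_kronecker_mul, mul_one, mulVec_dotProduct, mulVec_mulVec,
    ← kroneckerMap_transpose, transpose_one, ← mul_kronecker_mul, one_mul, Matrix.mul_assoc]

end Kronecker

lemma enorm2_sq {ι : Type*} [Fintype ι] (v : ι → ℝ) : enorm2 v ^ 2 = v ⬝ᵥ v := by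
  rw [enorm2, Real.sq_sqrt (Finset.sum_nonneg fun i _ => sq_nonneg _)]
  simp only [dotProduct, sq]

section Contraction

variable {ι : Type*} [Fintype ι] [DecidableEq ι] {σ : ℝ}

lemma posSemidef_sq_smul_one_sub_transpose_mul_self {S : Matrix ι ι ℝ}
    (hS : ∀ x, enorm2 (S *ᵥ x) ≤ σ * enorm2 x) :
    (σ ^ 2 • (1 : Matrix ι ι ℝ) - Sᵀ * S).PosSemidef := by
  refine .of_dotProduct_mulVec_nonneg ?_ fun x => ?_
  · simp [IsHermitian, conjTranspose_eq_transpose_of_trivial, transpose_sub, transpose_mul]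
  have hsq : enorm2 (S *ᵥ x) ^ 2 ≤ (σ * enorm2 x) ^ 2 :=
    pow_le_pow_left₀ (Real.sqrt_nonneg _) (hS x) 2
  rw [star_trivial, sub_mulVec, dotProduct_sub, smul_mulVec, one_mulVec, dotProduct_smul,
    smul_eq_mul, ← mulVec_mulVec, ← mulVec_dotProduct, ← enorm2_sq, ← enorm2_sq]
  linarith

lemma posSemidef_sq_smul_sub_transpose_mul_mul {P T : Matrix ι ι ℝ} (hPt : Pᵀ = P)
    (hPP : P * P = P) (hPTP : P * T * P = P * T)
    (hPT : ∀ x, enorm2 ((P * T) *ᵥ x) ≤ σ * enorm2 x) :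
    (σ ^ 2 • P - Tᵀ * P * T).PosSemidef := by
  have hconj : σ ^ 2 • P - Tᵀ * P * T = Pᴴ * (σ ^ 2 • 1 - (P * T)ᵀ * (P * T)) * P :=
    calc σ ^ 2 • P - Tᵀ * P * T = σ ^ 2 • (Pᵀ * P) - (P * T * P)ᵀ * (P * T * P) := by
          rw [hPTP, transpose_mul, hPt, hPP, Matrix.mul_assoc Tᵀ, Matrix.mul_assoc Tᵀ,
            ← Matrix.mul_assoc P P, hPP]
      _ = Pᴴ * (σ ^ 2 • 1 - (P * T)ᵀ * (P * T)) * P := by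
          simp only [conjTranspose_eq_transpose_of_trivial, Matrix.mul_sub, Matrix.sub_mul,
            transpose_mul, Matrix.mul_assoc, Matrix.mul_smul, Matrix.smul_mul, mul_one]
  rw [hconj]
  exact (posSemidef_sq_smul_one_sub_transpose_mul_self hPT).conjTranspose_mul_mul_same P

end Contraction

section projOnes

variable {n : ℕ}

lemma projOnes_transpose : (projOnes n)ᵀ = projOnes n := rfl

lemma isIdempotentElem_projOnes : IsIdempotentElem (projOnes n) := by
  ext i j
  rcases Nat.eq_zero_or_pos n with rfl | hn
  · exact i.elim0
  · simp only [projOnes, mul_apply, of_apply, Finset.sum_const, Finset.card_univ,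
      Fintype.card_fin, nsmul_eq_mul]
    field_simp

lemma projOnes_mul_eq_zero {L : Matrix (Fin n) (Fin n) ℝ} (hL : vecMul (fun _ => 1) L = 0) :
    projOnes n * L = 0 := by
  ext i j
  simpa [projOnes, mul_apply, ← Finset.mul_sum, vecMul, dotProduct] using
    Or.inr (congrFun hL j)

lemma mul_projOnes_eq_zero {L : Matrix (Fin n) (Fin n) ℝ} (hL : L *ᵥ (fun _ => 1) = 0) :
    L * projOnes n = 0 := by
  ext i j
  simpa [projOnes, mul_apply, ← Finset.sum_mul, mulVec, dotProduct] using
    Or.inl (congrFun hL i)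

end projOnes

theorem stmt_4_general (n c : ℕ) (σ : ℝ)
    (Lap : Matrix (Fin n) (Fin n) ℝ)
    (hL1 : Lap.mulVec (fun _ => (1 : ℝ)) = 0)
    (hL2 : Matrix.vecMul (fun _ => (1 : ℝ)) Lap = 0)
    (hLnorm : ∀ φ : Fin n → ℝ,
      enorm2 ((1 - projOnes n - Lap).mulVec φ) ≤ σ * enorm2 φ)
    (R : Matrix (Fin c) (Fin c) ℝ) (hR : R.PosSemidef)
    (zt : Fin n × Fin c → ℝ) :
    0 ≤ (fun p : Fin 2 × (Fin n × Fin c) =>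
          if p.1 = 0 then zt p.2
          else (Lap ⊗ₖ (1 : Matrix (Fin c) (Fin c) ℝ)).mulVec zt p.2) ⬝ᵥ
        ((M1 σ) ⊗ₖ ((1 - projOnes n) ⊗ₖ R)).mulVec
        (fun p : Fin 2 × (Fin n × Fin c) =>
          if p.1 = 0 then zt p.2
          else (Lap ⊗ₖ (1 : Matrix (Fin c) (Fin c) ℝ)).mulVec zt p.2) := by
  set P := 1 - projOnes n
  have hPt : Pᵀ = P := by rw [transpose_sub, transpose_one, projOnes_transpose]
  have hPP : P * P = P := isIdempotentElem_projOnes.one_sub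
  have hPL : P * Lap = Lap := by rw [Matrix.sub_mul, one_mul, projOnes_mul_eq_zero hL2, sub_zero]
  have hLP : Lap * P = Lap := by rw [Matrix.mul_sub, mul_one, mul_projOnes_eq_zero hL1, sub_zero]
  have hPT : P * (1 - Lap) = 1 - projOnes n - Lap := by rw [Matrix.mul_sub, mul_one, hPL]
  have hPTP : P * (1 - Lap) * P = P * (1 - Lap) := by rw [hPT, Matrix.sub_mul, hPP, hLP]
  have hK : (P ⊗ₖ R)ᵀ = P ⊗ₖ R := by
    rw [← kroneckerMap_transpose, hPt, ← conjTranspose_eq_transpose_of_trivial, hR.isHermitian]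
  have hstack : zt - (Lap ⊗ₖ (1 : Matrix (Fin c) (Fin c) ℝ)) *ᵥ zt
      = ((1 - Lap) ⊗ₖ (1 : Matrix (Fin c) (Fin c) ℝ)) *ᵥ zt := by
    rw [sub_kronecker, one_kronecker_one, sub_mulVec, one_mulVec]
  have hpsd := (posSemidef_sq_smul_sub_transpose_mul_mul hPt hPP hPTP
    (hPT ▸ hLnorm)).kronecker hR
  have hnonneg := hpsd.dotProduct_mulVec_nonneg zt
  rw [dotProduct_M1_kronecker_mulVec_stack σ hK, hstack,
    kronecker_one_mulVec_dotProduct_kronecker_mulVec]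
  rwa [star_trivial, sub_kronecker, smul_kronecker, sub_mulVec, smul_mulVec, dotProduct_sub,
    dotProduct_smul, smul_eq_mul] at hnonneg

/-- Graph inequality: for a balanced Laplacian with spectral gap `σ`, any PSD `R`,
and `ṽ := (L ⊗ I_c) z̃`, the quadratic form in `M₁ ⊗ (I−Π) ⊗ R` is nonnegative. -/
theorem stmt_4 (n c : ℕ) (σ : ℝ) (hσ0 : 0 ≤ σ) (hσ1 : σ < 1)
    (Lap : Matrix (Fin n) (Fin n) ℝ)
    (hL1 : Lap.mulVec (fun _ => (1 : ℝ)) = 0)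
    (hL2 : Matrix.vecMul (fun _ => (1 : ℝ)) Lap = 0)
    (hLnorm : ∀ φ : Fin n → ℝ,
      enorm2 ((1 - projOnes n - Lap).mulVec φ) ≤ σ * enorm2 φ)
    (R : Matrix (Fin c) (Fin c) ℝ) (hR : R.PosSemidef)
    (zt : Fin n × Fin c → ℝ) :
    0 ≤ (fun p : Fin 2 × (Fin n × Fin c) =>
          if p.1 = 0 then zt p.2
          else (Lap ⊗ₖ (1 : Matrix (Fin c) (Fin c) ℝ)).mulVec zt p.2) ⬝ᵥ
        ((M1 σ) ⊗ₖ ((1 - projOnes n) ⊗ₖ R)).mulVec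
        (fun p : Fin 2 × (Fin n × Fin c) =>
          if p.1 = 0 then zt p.2
          else (Lap ⊗ₖ (1 : Matrix (Fin c) (Fin c) ℝ)).mulVec zt p.2) :=
  stmt_4_general n c σ Lap hL1 hL2 hLnorm R hR zt
end

section
/- (Disagreement inequality.) Consider an algorithm of the form (alg) with a trajectory (x_i^k, y_i^k, z_i^k, u_i^k, v_i^k), and let (x*ᵢ, y*ᵢ, z*ᵢ, u*ᵢ, v*ᵢ) be a fixed point satisfying the fixed-point conditions (consensus, optimality, robustness). Let Q ≻ 0 (ν×ν) and R ⪰ 0 (c×c) be symmetric, ρ ≥ 0, M₀ := [[−2mL, L+m],[L+m, −2]], M₁ := [[σ²−1, 1],[1, −1]], and suppose N₂ᵀ · blockdiag(Q, −ρ²Q, M₀, M₁⊗R) · N₂ ⪯ 0, where N₂ stacks the rows [A B_u B_v], [I 0 0], [C_y D_{yu} D_{yv}], [0 1 0], [C_z D_{zu} D_{zv}], [0 0 I_c]. Then, with x̃^k, ỹ^k, ũ^k, z̃^k, ṽ^k the stacked error vectors, for every k: (x̃^{k+1})ᵀ ((I−Π)⊗Q) x̃^{k+1} − ρ² (x̃^k)ᵀ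 ((I−Π)⊗Q) x̃^k + [ỹ^k; ũ^k]ᵀ (M₀ ⊗ (I−Π)) [ỹ^k; ũ^k] + [z̃^k; ṽ^k]ᵀ (M₁ ⊗ (I−Π) ⊗ R) [z̃^k; ṽ^k] ≤ 0, where Π := (1/n)·1_n 1_nᵀ. -/
open Matrix BigOperators Kronecker

/-- The matrix `M₀ = [[−2mL, L+m],[L+m, −2]]`. -/
noncomputable def M0 (m L : ℝ) : Matrix (Fin 2) (Fin 2) ℝ :=
  !![-(2*m*L), L+m; L+m, -2]

/-- The quadratic form `[y; u]ᵀ M₀ [y; u]`. -/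
def quadM0 (m L y u : ℝ) : ℝ := -(2*m*L) * y^2 + 2*(L+m) * y * u - 2 * u^2

/-!
For the averaging projection `Π`, every quadratic form `w ⬝ ((I - Π) ⊗ S) w` equals
`(2n)⁻¹ ∑ᵢⱼ (wᵢ - wⱼ) ⬝ S (wᵢ - wⱼ)`. Applied to the four Kronecker blocks, this turns the
left-hand side into `(2n)⁻¹` times a sum, over pairs of agents `(i, j)`, of the quadratic form of
(LMI-2) evaluated at the differences of the errors of agents `i` and `j`. The algorithm is linear,
so these differences are again one step of the algorithm, and (LMI-2) makes every summand
nonpositive.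
-/

open Finset

theorem one_sub_projOnes_apply {n : ℕ} (i j : Fin n) :
    (1 - projOnes n) i j = (if i = j then 1 else 0) - (n : ℝ)⁻¹ := by
  simp [projOnes, one_apply]

theorem sum_one_sub_projOnes_mul {V : Type*} [AddCommGroup V] [Module ℝ V]
    (B : LinearMap.BilinForm ℝ V) {n : ℕ} (w : Fin n → V) :
    ∑ i, ∑ j, (1 - projOnes n) i j * B (w i) (w j)
      = (2 * n : ℝ)⁻¹ * ∑ i, ∑ j, B (w i - w j) (w i - w j) := by
  have hdiff : ∑ i, ∑ j, B (w i - w j) (w i - w j)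
      = 2 * (n * ∑ i, B (w i) (w i) - ∑ i, ∑ j, B (w i) (w j)) := by
    simp only [map_sub, LinearMap.sub_apply, sum_sub_distrib, sum_const, card_univ,
      Fintype.card_fin, nsmul_eq_mul, ← mul_sum]
    rw [sum_comm (f := fun i j => B (w j) (w i))]
    ring
  have hcenter : ∑ i, ∑ j, (1 - projOnes n) i j * B (w i) (w j)
      = ∑ i, B (w i) (w i) - (n : ℝ)⁻¹ * ∑ i, ∑ j, B (w i) (w j) := by
    simp only [one_sub_projOnes_apply, sub_mul, ite_mul, one_mul, zero_mul, sum_sub_distrib,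
      sum_ite_eq, mem_univ, if_true, mul_sum]
  rcases Nat.eq_zero_or_pos n with rfl | hn
  · simp
  rw [hcenter, hdiff]
  field_simp

section QuadraticForms

variable {α ι κ γ : Type*} [Fintype ι] [Fintype κ] [Fintype γ]

theorem sum_one_sub_projOnes_mul_dotProduct_mulVec (Q : Matrix κ κ ℝ) {n : ℕ}
    (w : Fin n → κ → ℝ) :
    ∑ i, ∑ j, (1 - projOnes n) i j * (w i ⬝ᵥ Q *ᵥ w j)
      = (2 * n : ℝ)⁻¹ * ∑ i, ∑ j, (w i - w j) ⬝ᵥ Q *ᵥ (w i - w j) := by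
  classical
  simpa only [toBilin'_apply'] using sum_one_sub_projOnes_mul (toBilin' Q) w

theorem Matrix.IsSymm.dotProduct_mulVec_comm [CommSemiring α] {R : Matrix κ κ α}
    (hR : R.IsSymm) (a b : κ → α) :
    a ⬝ᵥ R *ᵥ b = b ⬝ᵥ R *ᵥ a := by
  rw [dotProduct_mulVec, ← mulVec_transpose, hR.eq, dotProduct_comm]

variable [CommSemiring α]

theorem dotProduct_kronecker_mulVec (A : Matrix ι ι α) (B : Matrix κ κ α) (f g : ι × κ → α) :
    f ⬝ᵥ (A ⊗ₖ B) *ᵥ g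
      = ∑ i, ∑ j, A i j * ((fun a => f (i, a)) ⬝ᵥ B *ᵥ fun b => g (j, b)) := by
  simp only [dotProduct, mulVec, kroneckerMap_apply, Fintype.sum_prod_type, mul_sum]
  rw [sum_congr rfl fun i _ => sum_comm]
  refine sum_congr rfl fun i _ => sum_congr rfl fun j _ => sum_congr rfl fun a _ =>
    sum_congr rfl fun b _ => by ring

theorem dotProduct_kronecker_mulVec_right (A : Matrix ι ι α) (B : Matrix κ κ α)
    (f g : κ × ι → α) :
    f ⬝ᵥ (B ⊗ₖ A) *ᵥ g
      = ∑ i, ∑ j, A i j * ((fun a => f (a, i)) ⬝ᵥ B *ᵥ fun b => g (b, j)) := by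
  simp only [dotProduct, mulVec, kroneckerMap_apply, Fintype.sum_prod_type, mul_sum]
  rw [sum_comm]
  refine sum_congr rfl fun i _ => ?_
  rw [sum_congr rfl fun a _ => sum_comm, sum_comm]
  refine sum_congr rfl fun j _ => sum_congr rfl fun a _ => sum_congr rfl fun b _ => by ring

theorem dotProduct_kronecker_kronecker_mulVec (M : Matrix κ κ α) (A : Matrix ι ι α)
    (R : Matrix γ γ α) (f g : κ × (ι × γ) → α) :
    f ⬝ᵥ (M ⊗ₖ (A ⊗ₖ R)) *ᵥ g = ∑ i, ∑ j, A i j *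
      ((fun q => f (q.1, (i, q.2))) ⬝ᵥ (M ⊗ₖ R) *ᵥ fun q => g (q.1, (j, q.2))) := by
  simp only [dotProduct_kronecker_mulVec, mul_sum]
  conv_lhs => enter [2, s]; rw [sum_comm]
  conv_lhs => enter [2, s, 2, i]; rw [sum_comm]
  rw [sum_comm]
  conv_lhs => enter [2, i]; rw [sum_comm]
  exact sum_congr rfl fun i _ => sum_congr rfl fun j _ => sum_congr rfl fun s _ =>
    sum_congr rfl fun t _ => mul_left_comm _ _ _

end QuadraticForms

section Blocks

variable {κ : Type*} [Fintype κ] {n : ℕ}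

theorem dotProduct_M0_mulVec (m L : ℝ) (a : Fin 2 → ℝ) :
    a ⬝ᵥ M0 m L *ᵥ a = quadM0 m L (a 0) (a 1) := by
  simp only [dotProduct, mulVec, M0, quadM0, Fin.sum_univ_two, of_apply, cons_val',
    cons_val_zero, cons_val_one, empty_val', cons_val_fin_one]
  ring

theorem dotProduct_M1_kronecker_mulVec (σ : ℝ) {R : Matrix κ κ ℝ} (hR : R.IsSymm)
    (z v : κ → ℝ) :
    (fun q : Fin 2 × κ => if q.1 = 0 then z q.2 else v q.2) ⬝ᵥ (M1 σ ⊗ₖ R) *ᵥ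
        (fun q : Fin 2 × κ => if q.1 = 0 then z q.2 else v q.2)
      = (σ ^ 2 - 1) * (z ⬝ᵥ R *ᵥ z) + 2 * (z ⬝ᵥ R *ᵥ v) - v ⬝ᵥ R *ᵥ v := by
  simp only [dotProduct_kronecker_mulVec, Fin.sum_univ_two, M1, of_apply, cons_val',
    cons_val_zero, cons_val_one, empty_val', cons_val_fin_one, if_pos, one_ne_zero, if_false]
  rw [hR.dotProduct_mulVec_comm v z]
  ring

theorem dotProduct_one_sub_projOnes_kronecker_mulVec (Q : Matrix κ κ ℝ) (w : Fin n → κ → ℝ) :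
    (fun p : Fin n × κ => w p.1 p.2) ⬝ᵥ ((1 - projOnes n) ⊗ₖ Q) *ᵥ (fun p => w p.1 p.2)
      = (2 * n : ℝ)⁻¹ * ∑ i, ∑ j, (w i - w j) ⬝ᵥ Q *ᵥ (w i - w j) := by
  rw [dotProduct_kronecker_mulVec]
  exact sum_one_sub_projOnes_mul_dotProduct_mulVec Q w

theorem dotProduct_M0_kronecker_one_sub_projOnes_mulVec (m L : ℝ) (a b : Fin n → ℝ) :
    (fun p : Fin 2 × Fin n => if p.1 = 0 then a p.2 else b p.2) ⬝ᵥ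
        (M0 m L ⊗ₖ (1 - projOnes n)) *ᵥ (fun p => if p.1 = 0 then a p.2 else b p.2)
      = (2 * n : ℝ)⁻¹ * ∑ i, ∑ j, quadM0 m L (a i - a j) (b i - b j) := by
  rw [dotProduct_kronecker_mulVec_right, sum_one_sub_projOnes_mul_dotProduct_mulVec]
  simp only [dotProduct_M0_mulVec, Pi.sub_apply, if_pos, one_ne_zero, if_false]

theorem dotProduct_M1_kronecker_one_sub_projOnes_kronecker_mulVec (σ : ℝ)
    {R : Matrix κ κ ℝ} (hR : R.IsSymm) (a b : Fin n → κ → ℝ) :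
    (fun p : Fin 2 × (Fin n × κ) => if p.1 = 0 then a p.2.1 p.2.2 else b p.2.1 p.2.2) ⬝ᵥ
        (M1 σ ⊗ₖ ((1 - projOnes n) ⊗ₖ R)) *ᵥ
        (fun p => if p.1 = 0 then a p.2.1 p.2.2 else b p.2.1 p.2.2)
      = (2 * n : ℝ)⁻¹ * ∑ i, ∑ j, ((σ ^ 2 - 1) * ((a i - a j) ⬝ᵥ R *ᵥ (a i - a j))
          + 2 * ((a i - a j) ⬝ᵥ R *ᵥ (b i - b j)) - (b i - b j) ⬝ᵥ R *ᵥ (b i - b j)) := by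
  rw [dotProduct_kronecker_kronecker_mulVec, sum_one_sub_projOnes_mul_dotProduct_mulVec]
  congr 1
  refine sum_congr rfl fun i _ => sum_congr rfl fun j _ => ?_
  have hstack : (fun q : Fin 2 × κ => if q.1 = 0 then a i q.2 else b i q.2)
      - (fun q => if q.1 = 0 then a j q.2 else b j q.2)
      = fun q => if q.1 = 0 then (a i - a j) q.2 else (b i - b j) q.2 :=
    funext fun q => by simp only [Pi.sub_apply, ite_sub_ite]
  exact hstack ▸ dotProduct_M1_kronecker_mulVec σ hR (a i - a j) (b i - b j)

end Blocks

section AlgorithmStep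

variable {X W : Type*} [Fintype X] [Fintype W]
  (A : Matrix X X ℝ) (Bu : X → ℝ) (Bv : Matrix X W ℝ) (Cy : X → ℝ) (Dyu : ℝ) (Dyv : W → ℝ)
  (Cz : Matrix W X ℝ) (Dzu : W → ℝ) (Dzv : Matrix W W ℝ)

def IsAlgStep (x' x : X → ℝ) (y u : ℝ) (z v : W → ℝ) : Prop :=
  x' = A *ᵥ x + u • Bu + Bv *ᵥ v ∧ y = Cy ⬝ᵥ x + Dyu * u + Dyv ⬝ᵥ v ∧
    z = Cz *ᵥ x + u • Dzu + Dzv *ᵥ v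

/-- The quadratic form of `blockdiag(Q, -ρ²Q, M₀, M₁ ⊗ R)` at `[x'; x; y; u; z; v]`, with the
two off-diagonal `M₁`-terms merged into `2 * (z ⬝ R v)` (valid for symmetric `R`). -/
def lmiForm (Q : Matrix X X ℝ) (R : Matrix W W ℝ) (m L σ ρ : ℝ)
    (x' x : X → ℝ) (y u : ℝ) (z v : W → ℝ) : ℝ :=
  x' ⬝ᵥ Q *ᵥ x' - ρ ^ 2 * (x ⬝ᵥ Q *ᵥ x) + quadM0 m L y u + (σ ^ 2 - 1) * (z ⬝ᵥ R *ᵥ z)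
    + 2 * (z ⬝ᵥ R *ᵥ v) - v ⬝ᵥ R *ᵥ v

variable {A Bu Bv Cy Dyu Dyv Cz Dzu Dzv}

theorem IsAlgStep.sub {x₁' x₁ x₂' x₂ : X → ℝ} {y₁ u₁ y₂ u₂ : ℝ} {z₁ v₁ z₂ v₂ : W → ℝ}
    (h₁ : IsAlgStep A Bu Bv Cy Dyu Dyv Cz Dzu Dzv x₁' x₁ y₁ u₁ z₁ v₁)
    (h₂ : IsAlgStep A Bu Bv Cy Dyu Dyv Cz Dzu Dzv x₂' x₂ y₂ u₂ z₂ v₂) :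
    IsAlgStep A Bu Bv Cy Dyu Dyv Cz Dzu Dzv
      (x₁' - x₂') (x₁ - x₂) (y₁ - y₂) (u₁ - u₂) (z₁ - z₂) (v₁ - v₂) := by
  obtain ⟨rfl, rfl, rfl⟩ := h₁
  obtain ⟨rfl, rfl, rfl⟩ := h₂
  refine ⟨?_, ?_, ?_⟩
  · simp only [mulVec_sub, sub_smul]; abel
  · simp only [dotProduct_sub, mul_sub]; ring
  · simp only [mulVec_sub, sub_smul]; abel

theorem lmiForm_nonpos_of_isAlgStep {Q : Matrix X X ℝ} {R : Matrix W W ℝ} {m L σ ρ : ℝ}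
    (hLMI : ∀ x u v, lmiForm Q R m L σ ρ (A *ᵥ x + u • Bu + Bv *ᵥ v) x
      (Cy ⬝ᵥ x + Dyu * u + Dyv ⬝ᵥ v) u (Cz *ᵥ x + u • Dzu + Dzv *ᵥ v) v ≤ 0)
    {x' x : X → ℝ} {y u : ℝ} {z v : W → ℝ}
    (h : IsAlgStep A Bu Bv Cy Dyu Dyv Cz Dzu Dzv x' x y u z v) :
    lmiForm Q R m L σ ρ x' x y u z v ≤ 0 := by
  obtain ⟨rfl, rfl, rfl⟩ := h
  exact hLMI x u v

end AlgorithmStep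

theorem disagreement_eq_sum_lmiForm {X W : Type*} [Fintype X] [Fintype W] {n : ℕ}
    (Q : Matrix X X ℝ) {R : Matrix W W ℝ} (hR : R.IsSymm) (m L σ ρ : ℝ)
    (ex' ex : Fin n → X → ℝ) (ey eu : Fin n → ℝ) (ez ev : Fin n → W → ℝ) :
    (fun p : Fin n × X => ex' p.1 p.2) ⬝ᵥ ((1 - projOnes n) ⊗ₖ Q) *ᵥ (fun p => ex' p.1 p.2)
        - ρ ^ 2 * ((fun p : Fin n × X => ex p.1 p.2) ⬝ᵥ
            ((1 - projOnes n) ⊗ₖ Q) *ᵥ (fun p => ex p.1 p.2))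
        + (fun p : Fin 2 × Fin n => if p.1 = 0 then ey p.2 else eu p.2) ⬝ᵥ
            (M0 m L ⊗ₖ (1 - projOnes n)) *ᵥ (fun p => if p.1 = 0 then ey p.2 else eu p.2)
        + (fun p : Fin 2 × (Fin n × W) => if p.1 = 0 then ez p.2.1 p.2.2 else ev p.2.1 p.2.2)
            ⬝ᵥ (M1 σ ⊗ₖ ((1 - projOnes n) ⊗ₖ R)) *ᵥ
            (fun p => if p.1 = 0 then ez p.2.1 p.2.2 else ev p.2.1 p.2.2)
      = (2 * n : ℝ)⁻¹ * ∑ i, ∑ j, lmiForm Q R m L σ ρ (ex' i - ex' j) (ex i - ex j)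
          (ey i - ey j) (eu i - eu j) (ez i - ez j) (ev i - ev j) := by
  rw [dotProduct_one_sub_projOnes_kronecker_mulVec, dotProduct_one_sub_projOnes_kronecker_mulVec,
    dotProduct_M0_kronecker_one_sub_projOnes_mulVec,
    dotProduct_M1_kronecker_one_sub_projOnes_kronecker_mulVec σ hR]
  simp only [lmiForm, sum_add_distrib, sum_sub_distrib, ← mul_sum]
  ring

theorem stmt_8_general
    (ν c n : ℕ) (m L σ ρ : ℝ)
    (A : Matrix (Fin ν) (Fin ν) ℝ) (Bu : Fin ν → ℝ) (Bv : Matrix (Fin ν) (Fin c) ℝ)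
    (Cy : Fin ν → ℝ) (Dyu : ℝ) (Dyv : Fin c → ℝ)
    (Cz : Matrix (Fin c) (Fin ν) ℝ) (Dzu : Fin c → ℝ) (Dzv : Matrix (Fin c) (Fin c) ℝ)
    -- trajectory of the algorithm
    (x : ℕ → Fin n → Fin ν → ℝ) (y u : ℕ → Fin n → ℝ) (z v : ℕ → Fin n → Fin c → ℝ)
    (htraj1 : ∀ k i, x (k+1) i = A.mulVec (x k i) + u k i • Bu + Bv.mulVec (v k i))
    (htraj2 : ∀ k i, y k i = Cy ⬝ᵥ x k i + Dyu * u k i + Dyv ⬝ᵥ v k i)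
    (htraj3 : ∀ k i, z k i = Cz.mulVec (x k i) + u k i • Dzu + Dzv.mulVec (v k i))
    -- fixed point satisfying the fixed-point conditions
    (xstar : Fin n → Fin ν → ℝ) (ystar ustar : Fin n → ℝ)
    (zstar vstar : Fin n → Fin c → ℝ)
    (hstar1 : ∀ i, xstar i = A.mulVec (xstar i) + ustar i • Bu + Bv.mulVec (vstar i))
    (hstar2 : ∀ i, ystar i = Cy ⬝ᵥ xstar i + Dyu * ustar i + Dyv ⬝ᵥ vstar i)
    (hstar3 : ∀ i, zstar i = Cz.mulVec (xstar i) + ustar i • Dzu + Dzv.mulVec (vstar i))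
    -- Q ≻ 0, R ⪰ 0, and (LMI-2) as a quadratic form
    (Q : Matrix (Fin ν) (Fin ν) ℝ) (R : Matrix (Fin c) (Fin c) ℝ)
    (hR : R.PosSemidef)
    (hLMI2 : ∀ (xv : Fin ν → ℝ) (uv : ℝ) (vv : Fin c → ℝ),
      (A.mulVec xv + uv • Bu + Bv.mulVec vv) ⬝ᵥ
          Q.mulVec (A.mulVec xv + uv • Bu + Bv.mulVec vv)
        - ρ^2 * (xv ⬝ᵥ Q.mulVec xv)
        + quadM0 m L (Cy ⬝ᵥ xv + Dyu * uv + Dyv ⬝ᵥ vv) uv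
        + (σ^2 - 1) * ((Cz.mulVec xv + uv • Dzu + Dzv.mulVec vv) ⬝ᵥ
            R.mulVec (Cz.mulVec xv + uv • Dzu + Dzv.mulVec vv))
        + 2 * ((Cz.mulVec xv + uv • Dzu + Dzv.mulVec vv) ⬝ᵥ R.mulVec vv)
        - vv ⬝ᵥ R.mulVec vv ≤ 0) :
    ∀ k : ℕ,
      (fun p : Fin n × Fin ν => x (k+1) p.1 p.2 - xstar p.1 p.2) ⬝ᵥ
          ((1 - projOnes n) ⊗ₖ Q).mulVec
          (fun p : Fin n × Fin ν => x (k+1) p.1 p.2 - xstar p.1 p.2)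
        - ρ^2 * ((fun p : Fin n × Fin ν => x k p.1 p.2 - xstar p.1 p.2) ⬝ᵥ
            ((1 - projOnes n) ⊗ₖ Q).mulVec
            (fun p : Fin n × Fin ν => x k p.1 p.2 - xstar p.1 p.2))
        + (fun p : Fin 2 × Fin n =>
              if p.1 = 0 then y k p.2 - ystar p.2 else u k p.2 - ustar p.2) ⬝ᵥ
            ((M0 m L) ⊗ₖ (1 - projOnes n)).mulVec
            (fun p : Fin 2 × Fin n =>
              if p.1 = 0 then y k p.2 - ystar p.2 else u k p.2 - ustar p.2)
        + (fun p : Fin 2 × (Fin n × Fin c) =>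
              if p.1 = 0 then z k p.2.1 p.2.2 - zstar p.2.1 p.2.2
              else v k p.2.1 p.2.2 - vstar p.2.1 p.2.2) ⬝ᵥ
            ((M1 σ) ⊗ₖ ((1 - projOnes n) ⊗ₖ R)).mulVec
            (fun p : Fin 2 × (Fin n × Fin c) =>
              if p.1 = 0 then z k p.2.1 p.2.2 - zstar p.2.1 p.2.2
              else v k p.2.1 p.2.2 - vstar p.2.1 p.2.2) ≤ 0 := by
  intro k
  have hRsymm : R.IsSymm := isHermitian_iff_isSymm.mp hR.isHermitian
  have herr : ∀ i, IsAlgStep A Bu Bv Cy Dyu Dyv Cz Dzu Dzv (x (k+1) i - xstar i)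
      (x k i - xstar i) (y k i - ystar i) (u k i - ustar i) (z k i - zstar i)
      (v k i - vstar i) := fun i =>
    IsAlgStep.sub ⟨htraj1 k i, htraj2 k i, htraj3 k i⟩ ⟨hstar1 i, hstar2 i, hstar3 i⟩
  refine (disagreement_eq_sum_lmiForm Q hRsymm m L σ ρ (fun i => x (k+1) i - xstar i)
    (fun i => x k i - xstar i) (fun i => y k i - ystar i) (fun i => u k i - ustar i)
    (fun i => z k i - zstar i) (fun i => v k i - vstar i)).trans_le ?_
  exact mul_nonpos_of_nonneg_of_nonpos (by positivity) <| sum_nonpos fun i _ =>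
    sum_nonpos fun j _ => lmiForm_nonpos_of_isAlgStep hLMI2 ((herr i).sub (herr j))

/-- Disagreement inequality: feasibility of (LMI-2) implies the per-step disagreement
Lyapunov inequality along any trajectory. -/
theorem stmt_8
    (ν c n : ℕ) (m L σ ρ : ℝ)
    (hm : 0 < m) (hmL : m ≤ L) (hσ0 : 0 ≤ σ) (hσ1 : σ < 1) (hρ : 0 ≤ ρ)
    (A : Matrix (Fin ν) (Fin ν) ℝ) (Bu : Fin ν → ℝ) (Bv : Matrix (Fin ν) (Fin c) ℝ)
    (Cy : Fin ν → ℝ) (Dyu : ℝ) (Dyv : Fin c → ℝ)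
    (Cz : Matrix (Fin c) (Fin ν) ℝ) (Dzu : Fin c → ℝ) (Dzv : Matrix (Fin c) (Fin c) ℝ)
    -- trajectory of the algorithm
    (x : ℕ → Fin n → Fin ν → ℝ) (y u : ℕ → Fin n → ℝ) (z v : ℕ → Fin n → Fin c → ℝ)
    (htraj1 : ∀ k i, x (k+1) i = A.mulVec (x k i) + u k i • Bu + Bv.mulVec (v k i))
    (htraj2 : ∀ k i, y k i = Cy ⬝ᵥ x k i + Dyu * u k i + Dyv ⬝ᵥ v k i)
    (htraj3 : ∀ k i, z k i = Cz.mulVec (x k i) + u k i • Dzu + Dzv.mulVec (v k i))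
    -- fixed point satisfying the fixed-point conditions
    (xstar : Fin n → Fin ν → ℝ) (ystar ustar : Fin n → ℝ)
    (zstar vstar : Fin n → Fin c → ℝ)
    (hstar1 : ∀ i, xstar i = A.mulVec (xstar i) + ustar i • Bu + Bv.mulVec (vstar i))
    (hstar2 : ∀ i, ystar i = Cy ⬝ᵥ xstar i + Dyu * ustar i + Dyv ⬝ᵥ vstar i)
    (hstar3 : ∀ i, zstar i = Cz.mulVec (xstar i) + ustar i • Dzu + Dzv.mulVec (vstar i))
    (hcons_y : ∀ i j, ystar i = ystar j) (hopt_u : ∑ i, ustar i = 0)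
    (hcons_z : ∀ i j, zstar i = zstar j) (hrob_v : ∀ i, vstar i = 0)
    -- Q ≻ 0, R ⪰ 0, and (LMI-2) as a quadratic form
    (Q : Matrix (Fin ν) (Fin ν) ℝ) (R : Matrix (Fin c) (Fin c) ℝ)
    (hQ : Q.PosDef) (hR : R.PosSemidef)
    (hLMI2 : ∀ (xv : Fin ν → ℝ) (uv : ℝ) (vv : Fin c → ℝ),
      (A.mulVec xv + uv • Bu + Bv.mulVec vv) ⬝ᵥ
          Q.mulVec (A.mulVec xv + uv • Bu + Bv.mulVec vv)
        - ρ^2 * (xv ⬝ᵥ Q.mulVec xv)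
        + quadM0 m L (Cy ⬝ᵥ xv + Dyu * uv + Dyv ⬝ᵥ vv) uv
        + (σ^2 - 1) * ((Cz.mulVec xv + uv • Dzu + Dzv.mulVec vv) ⬝ᵥ
            R.mulVec (Cz.mulVec xv + uv • Dzu + Dzv.mulVec vv))
        + 2 * ((Cz.mulVec xv + uv • Dzu + Dzv.mulVec vv) ⬝ᵥ R.mulVec vv)
        - vv ⬝ᵥ R.mulVec vv ≤ 0) :
    ∀ k : ℕ,
      (fun p : Fin n × Fin ν => x (k+1) p.1 p.2 - xstar p.1 p.2) ⬝ᵥ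
          ((1 - projOnes n) ⊗ₖ Q).mulVec
          (fun p : Fin n × Fin ν => x (k+1) p.1 p.2 - xstar p.1 p.2)
        - ρ^2 * ((fun p : Fin n × Fin ν => x k p.1 p.2 - xstar p.1 p.2) ⬝ᵥ
            ((1 - projOnes n) ⊗ₖ Q).mulVec
            (fun p : Fin n × Fin ν => x k p.1 p.2 - xstar p.1 p.2))
        + (fun p : Fin 2 × Fin n =>
              if p.1 = 0 then y k p.2 - ystar p.2 else u k p.2 - ustar p.2) ⬝ᵥ
            ((M0 m L) ⊗ₖ (1 - projOnes n)).mulVec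
            (fun p : Fin 2 × Fin n =>
              if p.1 = 0 then y k p.2 - ystar p.2 else u k p.2 - ustar p.2)
        + (fun p : Fin 2 × (Fin n × Fin c) =>
              if p.1 = 0 then z k p.2.1 p.2.2 - zstar p.2.1 p.2.2
              else v k p.2.1 p.2.2 - vstar p.2.1 p.2.2) ⬝ᵥ
            ((M1 σ) ⊗ₖ ((1 - projOnes n) ⊗ₖ R)).mulVec
            (fun p : Fin 2 × (Fin n × Fin c) =>
              if p.1 = 0 then z k p.2.1 p.2.2 - zstar p.2.1 p.2.2
              else v k p.2.1 p.2.2 - vstar p.2.1 p.2.2) ≤ 0 :=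
  stmt_8_general ν c n m L σ ρ A Bu Bv Cy Dyu Dyv Cz Dzu Dzv x y u z v htraj1 htraj2 htraj3 xstar
    ystar ustar zstar vstar hstar1 hstar2 hstar3 Q R hR hLMI2
end
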